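/- arXiv:2112.12982 — 6 statements merged into one kernel-verified Lean document; each statement's English description precedes it below -/
import Mathlib

section
/- The composition of two continuous piecewise linear functions is continuous piecewise linear: if h : ℝ^l → ℝ^m and g : ℝ^m → ℝ^n are continuous piecewise linear, then g ∘ h is continuous piecewise linear. -/
open Finset in
/-- A closed polyhedron: a finite intersection of closed affine half-spaces. -/
def IsClosedPolyhedron {m : ℕ} (D : Set (Fin m → ℝ)) : Prop :=
  ∃ (q : ℕ) (a : Fin q → (Fin m → ℝ)) (c : Fin q → ℝ),
    D = {x | ∀ i, (∑ j, a i j * x j) + c i ≤ 0}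

open Finset in
/-- `h` coincides with an affine map on `D`. -/
def IsAffineOnSet {l m : ℕ} (h : (Fin l → ℝ) → (Fin m → ℝ)) (D : Set (Fin l → ℝ)) : Prop :=
  ∃ (A : Matrix (Fin m) (Fin l) ℝ) (c : Fin m → ℝ), ∀ x ∈ D, h x = A.mulVec x + c

/-- A continuous piecewise linear function: a finite set of closed polyhedra covers the
domain, and the function is affine on each of them. -/
def IsCPL {l m : ℕ} (h : (Fin l → ℝ) → (Fin m → ℝ)) : Prop :=
  ∃ P : Set (Set (Fin l → ℝ)), P.Finite ∧ (∀ D ∈ P, IsClosedPolyhedron D) ∧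
    ⋃₀ P = Set.univ ∧ ∀ D ∈ P, IsAffineOnSet h D

lemma poly_inter {m : ℕ} {D E : Set (Fin m → ℝ)} (hD : IsClosedPolyhedron D)
    (hE : IsClosedPolyhedron E) : IsClosedPolyhedron (D ∩ E) := by
  obtain ⟨q, a, c, rfl⟩ := hD
  obtain ⟨q', a', c', rfl⟩ := hE
  refine ⟨q + q', Fin.append a a', Fin.append c c', ?_⟩
  ext x
  simp only [Set.mem_inter_iff, Set.mem_setOf_eq]
  constructor
  · rintro ⟨h1, h2⟩ i
    refine Fin.addCases (fun i => ?_) (fun i => ?_) i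
    · simpa [Fin.append_left] using h1 i
    · simpa [Fin.append_right] using h2 i
  · intro hi
    exact ⟨fun i => by simpa [Fin.append_left] using hi (Fin.castAdd _ i),
           fun i => by simpa [Fin.append_right] using hi (Fin.natAdd _ i)⟩

open Finset in
lemma poly_preimage {l m : ℕ} (A : Matrix (Fin m) (Fin l) ℝ) (c₀ : Fin m → ℝ)
    {E : Set (Fin m → ℝ)} (hE : IsClosedPolyhedron E) :
    IsClosedPolyhedron ((fun x => A.mulVec x + c₀) ⁻¹' E) := by
  obtain ⟨q, a, c, rfl⟩ := hE
  refine ⟨q, fun i k => ∑ j, a i j * A j k, fun i => (∑ j, a i j * c₀ j) + c i, ?_⟩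
  ext x
  simp only [Set.mem_preimage, Set.mem_setOf_eq]
  refine forall_congr' fun i => iff_of_eq ?_
  have key : (∑ k, (∑ j, a i j * A j k) * x k) + ((∑ j, a i j * c₀ j) + c i)
      = (∑ j, a i j * (A.mulVec x + c₀) j) + c i := by
    simp only [Pi.add_apply, Matrix.mulVec, dotProduct, mul_add,
      Finset.sum_add_distrib, Finset.mul_sum, Finset.sum_mul]
    rw [Finset.sum_comm]
    ring_nf
  rw [key]

theorem cpl_comp {l m n : ℕ} (h : (Fin l → ℝ) → (Fin m → ℝ)) (g : (Fin m → ℝ) → (Fin n → ℝ))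
    (hh : IsCPL h) (hg : IsCPL g) : IsCPL (g ∘ h) := by
  obtain ⟨P, hPfin, hPpoly, hPcov, hPaff⟩ := hh
  obtain ⟨Q, hQfin, hQpoly, hQcov, hQaff⟩ := hg
  refine ⟨(fun p : Set (Fin l → ℝ) × Set (Fin m → ℝ) => p.1 ∩ h ⁻¹' p.2) '' (P ×ˢ Q),
    (hPfin.prod hQfin).image _, ?_, ?_, ?_⟩
  · rintro S ⟨⟨D, E⟩, hDE, rfl⟩
    obtain ⟨hD, hE⟩ := Set.mem_prod.mp hDE
    obtain ⟨A, c₀, hA⟩ := hPaff D hD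
    have heq : D ∩ h ⁻¹' E = D ∩ (fun x => A.mulVec x + c₀) ⁻¹' E := by
      ext x
      simp only [Set.mem_inter_iff, Set.mem_preimage]
      exact and_congr_right fun hx => by rw [hA x hx]
    show IsClosedPolyhedron (D ∩ h ⁻¹' E)
    rw [heq]
    exact poly_inter (hPpoly D hD) (poly_preimage A c₀ (hQpoly E hE))
  · refine Set.eq_univ_iff_forall.mpr fun x => ?_
    have hx : x ∈ ⋃₀ P := hPcov ▸ Set.mem_univ x
    obtain ⟨D, hD, hxD⟩ := hx
    have hhx : h x ∈ ⋃₀ Q := hQcov ▸ Set.mem_univ (h x)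
    obtain ⟨E, hE, hxE⟩ := hhx
    exact ⟨D ∩ h ⁻¹' E, ⟨(D, E), Set.mem_prod.mpr ⟨hD, hE⟩, rfl⟩, hxD, hxE⟩
  · rintro S ⟨⟨D, E⟩, hDE, rfl⟩
    obtain ⟨hD, hE⟩ := Set.mem_prod.mp hDE
    obtain ⟨A, c₀, hA⟩ := hPaff D hD
    obtain ⟨B, d, hB⟩ := hQaff E hE
    refine ⟨B * A, B.mulVec c₀ + d, fun x hx => ?_⟩
    obtain ⟨hxD, hxE⟩ := hx
    simp only [Function.comp_apply]
    rw [hB (h x) hxE, hA x hxD, Matrix.mulVec_add, ← Matrix.mulVec_mulVec, add_assoc]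
end

section
/- For every continuous piecewise linear function g : ℝ^m → ℝ^n there exists an admissible set of closed polyhedra with respect to g, i.e., a finite set Π of closed polyhedra such that their union is ℝ^m, g is affine on each D ∈ Π, and every D ∈ Π has nonempty interior. -/
lemma IsClosedPolyhedron.isClosed {m : ℕ} {D : Set (Fin m → ℝ)}
    (hD : IsClosedPolyhedron D) : IsClosed D := by
  obtain ⟨q, a, c, rfl⟩ := hD
  have : {x : Fin m → ℝ | ∀ i, (∑ j, a i j * x j) + c i ≤ 0} =
      ⋂ i, {x : Fin m → ℝ | (∑ j, a i j * x j) + c i ≤ 0} := by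
    ext x; simp
  rw [this]
  refine isClosed_iInter fun i => ?_
  have hc : Continuous fun x : Fin m → ℝ => (∑ j, a i j * x j) + c i := by
    refine Continuous.add ?_ continuous_const
    exact continuous_finset_sum _ fun j _ => continuous_const.mul (continuous_apply j)
  exact isClosed_le hc continuous_const

lemma interior_sUnion_union_of_empty {X : Type*} [TopologicalSpace X] {B : Set (Set X)}
    (hB : B.Finite) :
    ∀ t : Set X, IsClosed t → (∀ D ∈ B, IsClosed D ∧ interior D = ∅) →
      interior (⋃₀ B ∪ t) = interior t := by
  refine Set.Finite.induction_on (motive := fun B _ => ∀ t : Set X, IsClosed t →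
    (∀ D ∈ B, IsClosed D ∧ interior D = ∅) → interior (⋃₀ B ∪ t) = interior t)
    B hB (by intro t _ _; simp) ?_
  intro a B ha hBfin ih t ht h
  have hBc : ∀ D ∈ B, IsClosed D ∧ interior D = ∅ :=
    fun D hD => h D (Set.mem_insert_of_mem _ hD)
  have hclosed : IsClosed (⋃₀ B ∪ t) := by
    refine IsClosed.union ?_ ht
    rw [Set.sUnion_eq_biUnion]
    exact hBfin.isClosed_biUnion fun D hD => (hBc D hD).1
  rw [Set.sUnion_insert, Set.union_assoc, Set.union_comm a,
    interior_union_isClosed_of_interior_empty hclosed (h _ (Set.mem_insert _ _)).2]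
  exact ih t ht hBc

theorem exists_admissible_set {m n : ℕ} (g : (Fin m → ℝ) → (Fin n → ℝ)) (hg : IsCPL g) :
    ∃ P : Set (Set (Fin m → ℝ)), P.Finite ∧ (∀ D ∈ P, IsClosedPolyhedron D) ∧
      ⋃₀ P = Set.univ ∧ (∀ D ∈ P, IsAffineOnSet g D) ∧
      ∀ D ∈ P, (interior D).Nonempty := by
  obtain ⟨P, hPfin, hpoly, hcov, haff⟩ := hg
  refine ⟨{D ∈ P | (interior D).Nonempty}, hPfin.subset (Set.sep_subset _ _),
    fun D hD => hpoly D hD.1, ?_, fun D hD => haff D hD.1, fun D hD => hD.2⟩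
  set Q : Set (Set (Fin m → ℝ)) := {D ∈ P | (interior D).Nonempty}
  have hsplit : ⋃₀ P = ⋃₀ (P \ Q) ∪ ⋃₀ Q := by
    rw [← Set.sUnion_union, Set.diff_union_of_subset (Set.sep_subset _ _)]
  have hbad : ∀ D ∈ P \ Q, IsClosed D ∧ interior D = ∅ := by
    intro D hD
    refine ⟨(hpoly D hD.1).isClosed, ?_⟩
    by_contra h
    exact hD.2 ⟨hD.1, Set.nonempty_iff_ne_empty.mpr h⟩
  have hQc : IsClosed (⋃₀ Q) := by
    rw [Set.sUnion_eq_biUnion]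
    exact (hPfin.subset (Set.sep_subset _ _)).isClosed_biUnion
      fun D hD => (hpoly D hD.1).isClosed
  have := interior_sUnion_union_of_empty (hPfin.subset Set.diff_subset) (⋃₀ Q) hQc hbad
  rw [← hsplit, hcov, interior_univ] at this
  exact Set.univ_subset_iff.mp (this ▸ interior_subset)
end

section
/- If h : ℝ^l → ℝ^m is continuous piecewise linear and 𝒫 is a finite set of closed polyhedra of ℝ^m, then the union over D ∈ 𝒫 of the topological boundaries ∂h⁻¹(D) is contained in a finite union of affine hyperplanes of ℝ^l. -/
open Finset

/-- Hyperplane determined by a pair (normal vector, constant). -/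
def HypSet {l : ℕ} (p : (Fin l → ℝ) × ℝ) : Set (Fin l → ℝ) :=
  {x | (∑ j, p.1 j * x j) + p.2 = 0}

/-- The set is covered by finitely many hyperplanes with nonzero normals. -/
def HypCov {l : ℕ} (S : Set (Fin l → ℝ)) : Prop :=
  ∃ F : Finset ((Fin l → ℝ) × ℝ), (∀ p ∈ F, p.1 ≠ 0) ∧ S ⊆ ⋃ p ∈ F, HypSet p

lemma hypCov_mono {l : ℕ} {S T : Set (Fin l → ℝ)} (hST : S ⊆ T) (hT : HypCov T) : HypCov S := by
  obtain ⟨F, h1, h2⟩ := hT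
  exact ⟨F, h1, hST.trans h2⟩

lemma hypCov_union {l : ℕ} {S T : Set (Fin l → ℝ)} (hS : HypCov S) (hT : HypCov T) :
    HypCov (S ∪ T) := by
  obtain ⟨F, hF1, hF2⟩ := hS
  obtain ⟨G, hG1, hG2⟩ := hT
  refine ⟨F ∪ G, ?_, ?_⟩
  · intro p hp
    rcases Finset.mem_union.1 hp with hp | hp
    · exact hF1 p hp
    · exact hG1 p hp
  · intro x hx
    rcases hx with hx | hx
    · obtain ⟨p, hp, hxp⟩ := Set.mem_iUnion₂.1 (hF2 hx)
      exact Set.mem_iUnion₂.2 ⟨p, Finset.mem_union_left _ hp, hxp⟩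
    · obtain ⟨p, hp, hxp⟩ := Set.mem_iUnion₂.1 (hG2 hx)
      exact Set.mem_iUnion₂.2 ⟨p, Finset.mem_union_right _ hp, hxp⟩

lemma hypCov_empty {l : ℕ} : HypCov (∅ : Set (Fin l → ℝ)) :=
  ⟨∅, by simp, by simp⟩

lemma hypCov_finsetBiUnion {l : ℕ} {ι : Type*} (s : Finset ι)
    {f : ι → Set (Fin l → ℝ)} (hf : ∀ i ∈ s, HypCov (f i)) :
    HypCov (⋃ i ∈ s, f i) := by
  classical
  induction s using Finset.induction_on with
  | empty => simpa using hypCov_empty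
  | insert a t hx ih =>
      rw [Finset.set_biUnion_insert]
      exact hypCov_union (hf a (Finset.mem_insert_self _ _))
        (ih fun i hi => hf i (Finset.mem_insert_of_mem hi))

lemma hypCov_biUnion {l : ℕ} {ι : Type*} {s : Set ι} (hs : s.Finite)
    {f : ι → Set (Fin l → ℝ)} (hf : ∀ i ∈ s, HypCov (f i)) :
    HypCov (⋃ i ∈ s, f i) := by
  have : (⋃ i ∈ s, f i) = ⋃ i ∈ hs.toFinset, f i := by simp
  rw [this]
  exact hypCov_finsetBiUnion _ fun i hi => hf i (hs.mem_toFinset.1 hi)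

lemma affine_continuous {l : ℕ} (a : Fin l → ℝ) (c : ℝ) :
    Continuous (fun x : Fin l → ℝ => (∑ j, a j * x j) + c) := by
  apply Continuous.add _ continuous_const
  exact continuous_finset_sum _ fun j _ => (continuous_const.mul (continuous_apply j))

lemma frontier_poly {l : ℕ} {ι : Type*} [Fintype ι] (a : ι → (Fin l → ℝ)) (c : ι → ℝ) :
    frontier {x : Fin l → ℝ | ∀ i, (∑ j, a i j * x j) + c i ≤ 0} ⊆
      ⋃ i ∈ {i | a i ≠ 0}, {x : Fin l → ℝ | (∑ j, a i j * x j) + c i = 0} := by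
  classical
  set Q : Set (Fin l → ℝ) := {x | ∀ i, (∑ j, a i j * x j) + c i ≤ 0} with hQ
  by_cases hdeg : ∃ i, a i = 0 ∧ 0 < c i
  · obtain ⟨i, hai, hci⟩ := hdeg
    have : Q = ∅ := by
      ext x
      simp only [hQ, Set.mem_setOf_eq, Set.mem_empty_iff_false, iff_false]
      intro hx
      have := hx i
      rw [hai] at this
      simp at this
      linarith
    rw [this]
    simp
  · push_neg at hdeg
    have hQclosed : IsClosed Q := by
      have : Q = ⋂ i, (fun x : Fin l → ℝ => (∑ j, a i j * x j) + c i) ⁻¹' Set.Iic 0 := by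
        ext x; simp [hQ]
      rw [this]
      exact isClosed_iInter fun i => (isClosed_Iic).preimage (affine_continuous _ _)
    set U : Set (Fin l → ℝ) := {x | ∀ i, a i ≠ 0 → (∑ j, a i j * x j) + c i < 0} with hU
    have hUopen : IsOpen U := by
      have : U = ⋂ i ∈ {i | a i ≠ 0},
          (fun x : Fin l → ℝ => (∑ j, a i j * x j) + c i) ⁻¹' Set.Iio 0 := by
        ext x; simp [hU]
      rw [this]
      exact Set.Finite.isOpen_biInter (Set.toFinite _)
        fun i _ => (isOpen_Iio).preimage (affine_continuous _ _)
    have hUQ : U ⊆ Q := by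
      intro x hx i
      by_cases hai : a i = 0
      · have : (∑ j, a i j * x j) = 0 := by
          rw [hai]; simp
        rw [this]
        simpa using hdeg i hai
      · exact (hx i hai).le
    intro x hx
    have hxQ : x ∈ Q := hQclosed.closure_eq ▸ hx.1
    have hxU : x ∉ U := fun hxU => hx.2 (interior_maximal hUQ hUopen hxU)
    simp only [hU, Set.mem_setOf_eq, not_forall] at hxU
    obtain ⟨i, hai, hge⟩ := hxU
    push_neg at hge
    refine Set.mem_biUnion hai ?_
    exact le_antisymm (hxQ i) hge

lemma hypCov_frontier_poly {l : ℕ} {ι : Type*} [Fintype ι] (a : ι → (Fin l → ℝ)) (c : ι → ℝ) :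
    HypCov (frontier {x : Fin l → ℝ | ∀ i, (∑ j, a i j * x j) + c i ≤ 0}) := by
  classical
  refine ⟨(Finset.univ.filter (fun i => a i ≠ 0)).image (fun i => (a i, c i)), ?_, ?_⟩
  · intro p hp
    obtain ⟨i, hi, rfl⟩ := Finset.mem_image.1 hp
    exact (Finset.mem_filter.1 hi).2
  · refine (frontier_poly a c).trans ?_
    intro x hx
    obtain ⟨i, hai, hxi⟩ := Set.mem_iUnion₂.1 hx
    refine Set.mem_iUnion₂.2 ⟨(a i, c i), ?_, hxi⟩
    exact Finset.mem_image.2 ⟨i, Finset.mem_filter.2 ⟨Finset.mem_univ _, hai⟩, rfl⟩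

lemma key_algebra {l m : ℕ} (a2 : Fin m → ℝ) (A : Matrix (Fin m) (Fin l) ℝ)
    (cc : Fin m → ℝ) (x : Fin l → ℝ) :
    ∑ j, a2 j * ((A.mulVec x + cc) j) =
      (∑ k, (∑ j, a2 j * A j k) * x k) + ∑ j, a2 j * cc j := by
  simp only [Matrix.mulVec, dotProduct, Pi.add_apply, mul_add, Finset.mul_sum,
    Finset.sum_add_distrib, Finset.sum_mul]
  rw [Finset.sum_comm (γ := Fin l)]
  ring_nf

lemma hypCov_frontier_piece {l m : ℕ} (h : (Fin l → ℝ) → (Fin m → ℝ))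
    (E : Set (Fin l → ℝ)) (hE : IsClosedPolyhedron E) (hAff : IsAffineOnSet h E)
    (D : Set (Fin m → ℝ)) (hD : IsClosedPolyhedron D) :
    HypCov (frontier (E ∩ h ⁻¹' D)) := by
  obtain ⟨q1, a1, c1, hE⟩ := hE
  obtain ⟨A, cc, hAff⟩ := hAff
  obtain ⟨q2, a2, c2, hD⟩ := hD
  set g : Fin q1 ⊕ Fin q2 → (Fin l → ℝ) :=
    Sum.elim a1 (fun i k => ∑ j, a2 i j * A j k) with hg
  set d : Fin q1 ⊕ Fin q2 → ℝ :=
    Sum.elim c1 (fun i => (∑ j, a2 i j * cc j) + c2 i) with hd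
  have hset : E ∩ h ⁻¹' D = {x | ∀ i, (∑ j, g i j * x j) + d i ≤ 0} := by
    ext x
    constructor
    · rintro ⟨hxE, hxD⟩
      rintro (i | i)
      · rw [hE] at hxE
        exact hxE i
      · have hhx : h x = A.mulVec x + cc := hAff x hxE
        have hxD' : ∀ i, (∑ j, a2 i j * (h x) j) + c2 i ≤ 0 := by
          rw [hD] at hxD; exact hxD
        have := hxD' i
        rw [hhx, key_algebra] at this
        simpa [hg, hd, add_assoc] using this
    · intro hx
      have hxE : x ∈ E := by
        rw [hE]
        intro i
        exact hx (Sum.inl i)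
      refine ⟨hxE, ?_⟩
      have hhx : h x = A.mulVec x + cc := hAff x hxE
      rw [Set.mem_preimage, hD]
      intro i
      have := hx (Sum.inr i)
      simp only [hg, hd, Sum.elim_inr] at this
      rw [hhx, key_algebra]
      linarith
  rw [hset]
  exact hypCov_frontier_poly g d

lemma frontier_finsetBiUnion_subset {l : ℕ} {ι : Type*} (f : ι → Set (Fin l → ℝ))
    (s : Finset ι) :
    frontier (⋃ i ∈ s, f i) ⊆ ⋃ i ∈ s, frontier (f i) := by
  classical
  induction s using Finset.induction_on with
  | empty => simp
  | insert a t hx ih =>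
      rw [Finset.set_biUnion_insert]
      refine (frontier_union_subset _ _).trans ?_
      rw [Finset.set_biUnion_insert]
      exact Set.union_subset_union Set.inter_subset_left (Set.inter_subset_right.trans ih)

theorem boundaries_subset_union_hyperplanes {l m : ℕ} (h : (Fin l → ℝ) → (Fin m → ℝ))
    (hh : IsCPL h) (Pcal : Set (Set (Fin m → ℝ))) (hfin : Pcal.Finite)
    (hpoly : ∀ D ∈ Pcal, IsClosedPolyhedron D) :
    ∃ (s : ℕ) (a : Fin s → (Fin l → ℝ)) (c : Fin s → ℝ), (∀ k, a k ≠ 0) ∧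
      (⋃ D ∈ Pcal, frontier (h ⁻¹' D)) ⊆ ⋃ k, {x | (∑ j, a k j * x j) + c k = 0} := by
  classical
  obtain ⟨P, hPfin, hPpoly, hPcover, hPaff⟩ := hh
  have main : HypCov (⋃ D ∈ Pcal, frontier (h ⁻¹' D)) := by
    refine hypCov_biUnion hfin fun D hD => ?_
    have hpre : h ⁻¹' D = ⋃ E ∈ hPfin.toFinset, (E ∩ h ⁻¹' D) := by
      ext x
      simp only [Set.mem_iUnion, Set.mem_inter_iff, Set.mem_preimage]
      constructor
      · intro hx
        have hxuniv : x ∈ ⋃₀ P := by rw [hPcover]; trivial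
        obtain ⟨E, hE, hxE⟩ := hxuniv
        exact ⟨E, hPfin.mem_toFinset.2 hE, hxE, hx⟩
      · rintro ⟨E, _, _, hx⟩
        exact hx
    rw [hpre]
    refine hypCov_mono (frontier_finsetBiUnion_subset _ _) ?_
    refine hypCov_finsetBiUnion _ fun E hE => ?_
    have hEP : E ∈ P := hPfin.mem_toFinset.1 hE
    exact hypCov_frontier_piece h E (hPpoly E hEP) (hPaff E hEP) D (hpoly D hD)
  obtain ⟨F, hF1, hF2⟩ := main
  refine ⟨F.card, fun k => ((F.equivFin.symm k : F) : (Fin l → ℝ) × ℝ).1,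
    fun k => ((F.equivFin.symm k : F) : (Fin l → ℝ) × ℝ).2, ?_, ?_⟩
  · intro k
    exact hF1 _ (F.equivFin.symm k).2
  · intro x hx
    obtain ⟨p, hp, hxp⟩ := Set.mem_iUnion₂.1 (hF2 hx)
    refine Set.mem_iUnion.2 ⟨F.equivFin ⟨p, hp⟩, ?_⟩
    simp only [Set.mem_setOf_eq, Equiv.symm_apply_apply]
    exact hxp
end

section
/- If two normalized ReLU network parameterizations (M,b) and (M̃,b̃) are equivalent modulo permutation and positive rescaling, then all rescaling factors are 1: there exist permutations φ_k (identity at input and output layers) such that M̃^k = P_{φ_k} M^k P_{φ_{k+1}}⁻¹ and b̃^k = P_{φ_k} b^k for all k. -/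
/-- Componentwise ReLU on `ℝ^m`. -/
def relu {m : ℕ} (x : Fin m → ℝ) : Fin m → ℝ := fun i => max (x i) 0

/-- The permutation matrix of `φ`: entry `(i,j)` is `1` if `φ j = i`, else `0`. -/
def permMatrix {m : ℕ} (φ : Equiv.Perm (Fin m)) : Matrix (Fin m) (Fin m) ℝ :=
  fun i j => if φ j = i then 1 else 0

/-- Parameters of a fully-connected feedforward network with layer sizes `n k`
(layers indexed in reverse order: the input layer is layer `K`, the output layer is
layer `0`; only indices `k < K` are relevant). -/
structure NetParams (n : ℕ → ℕ) where
  M : ∀ k : ℕ, Matrix (Fin (n k)) (Fin (n (k + 1))) ℝ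
  b : ∀ k : ℕ, Fin (n k) → ℝ

/-- Equivalence modulo permutation of hidden neurons and positive rescaling. -/
def NetEquiv (K : ℕ) {n : ℕ → ℕ} (p q : NetParams n) : Prop :=
  ∃ (φ : ∀ k : ℕ, Equiv.Perm (Fin (n k))) (l : ∀ k : ℕ, Fin (n k) → ℝ),
    (∀ k i, 0 < l k i) ∧
    φ 0 = Equiv.refl _ ∧ φ K = Equiv.refl _ ∧
    (∀ i, l 0 i = 1) ∧ (∀ i, l K i = 1) ∧
    ∀ k < K,
      q.M k = permMatrix (φ k) * Matrix.diagonal (l k) * p.M k *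
        (Matrix.diagonal (l (k + 1)))⁻¹ * (permMatrix (φ (k + 1)))⁻¹ ∧
      q.b k = (permMatrix (φ k) * Matrix.diagonal (l k)).mulVec (p.b k)

/-- The map implemented by layer `k`: affine map followed by ReLU, except at the
output layer (`k = 0`) where there is no activation. -/
def layerMap {n : ℕ → ℕ} (p : NetParams n) (k : ℕ) (x : Fin (n (k + 1)) → ℝ) : Fin (n k) → ℝ :=
  if k = 0 then (p.M k).mulVec x + p.b k else relu ((p.M k).mulVec x + p.b k)

/-- The function implemented by the network restricted to layers `K, ..., 0`:
`h_0 ∘ h_1 ∘ ⋯ ∘ h_{K-1}`. -/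
def netFun {n : ℕ → ℕ} (p : NetParams n) : (K : ℕ) → (Fin (n K) → ℝ) → (Fin (n 0) → ℝ)
  | 0 => id
  | K + 1 => fun x => netFun p K (layerMap p K x)

lemma permMatrix_eq {m : ℕ} (φ : Equiv.Perm (Fin m)) :
    permMatrix φ = (φ⁻¹).toPEquiv.toMatrix := by
  ext i j
  simp [permMatrix, PEquiv.toMatrix, Equiv.toPEquiv_apply, Equiv.Perm.inv_def,
    Equiv.apply_eq_iff_eq_symm_apply, Equiv.eq_symm_apply, eq_comm]

lemma permMatrix_mul_inv {m : ℕ} (φ : Equiv.Perm (Fin m)) :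
    permMatrix φ * permMatrix φ⁻¹ = 1 := by
  rw [permMatrix_eq, permMatrix_eq, ← PEquiv.toMatrix_trans, ← Equiv.toPEquiv_trans]
  rw [show φ⁻¹.trans φ⁻¹⁻¹ = Equiv.refl _ by ext x; simp, Equiv.toPEquiv_refl, PEquiv.toMatrix_refl]

lemma permMatrix_inv {m : ℕ} (φ : Equiv.Perm (Fin m)) :
    (permMatrix φ)⁻¹ = permMatrix φ⁻¹ :=
  Matrix.inv_eq_right_inv (permMatrix_mul_inv φ)

lemma entry_formula {m n' : ℕ} (φ : Equiv.Perm (Fin m)) (ψ : Equiv.Perm (Fin n'))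
    (a : Fin m → ℝ) (A : Matrix (Fin m) (Fin n') ℝ) (i : Fin m) (j : Fin n') :
    (permMatrix φ * Matrix.diagonal a * A * permMatrix ψ⁻¹) i j
      = a (φ⁻¹ i) * A (φ⁻¹ i) (ψ⁻¹ j) := by
  rw [permMatrix_eq φ, permMatrix_eq ψ⁻¹, inv_inv, Matrix.mul_assoc, Matrix.mul_assoc,
    PEquiv.toMatrix_toPEquiv_mul, PEquiv.mul_toMatrix_toPEquiv]
  simp [Matrix.diagonal_mul, Equiv.Perm.inv_def]

theorem netEquiv_normalized_perm (K : ℕ) (hK : 2 ≤ K) (n : ℕ → ℕ) (p q : NetParams n)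
    (hp : ∀ k, 1 ≤ k → k < K → ∀ i : Fin (n k), Real.sqrt (∑ j, (p.M k i j) ^ 2) = 1)
    (hq : ∀ k, 1 ≤ k → k < K → ∀ i : Fin (n k), Real.sqrt (∑ j, (q.M k i j) ^ 2) = 1)
    (h : NetEquiv K p q) :
    ∃ φ : ∀ k : ℕ, Equiv.Perm (Fin (n k)),
      φ 0 = Equiv.refl _ ∧ φ K = Equiv.refl _ ∧
      ∀ k < K,
        q.M k = permMatrix (φ k) * p.M k * (permMatrix (φ (k + 1)))⁻¹ ∧
        q.b k = (permMatrix (φ k)).mulVec (p.b k) := by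
  obtain ⟨φ, l, hlpos, hφ0, hφK, hl0, hlK, heq⟩ := h
  have key : ∀ d k, k + d = K → ∀ i, l k i = 1 := by
    intro d
    induction d with
    | zero =>
      intro k hk i
      have : k = K := by omega
      subst this; exact hlK i
    | succ d ih =>
      intro k hk i
      have hl1 : ∀ j, l (k + 1) j = 1 := ih (k + 1) (by omega)
      rcases Nat.eq_zero_or_pos k with h0 | h1
      · subst h0; exact hl0 i
      · have hkK : k < K := by omega
        obtain ⟨hM, _⟩ := heq k hkK
        have hdiag1 : Matrix.diagonal (l (k + 1)) = 1 := by
          rw [show l (k + 1) = fun _ => 1 from funext hl1]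
          exact Matrix.diagonal_one
        rw [hdiag1, inv_one, Matrix.mul_one, permMatrix_inv] at hM
        have hent : ∀ i' j, q.M k i' j
            = l k ((φ k)⁻¹ i') * p.M k ((φ k)⁻¹ i') ((φ (k + 1))⁻¹ j) := by
          intro i' j; rw [hM]; exact entry_formula _ _ _ _ i' j
        have hrow : ∀ i', ∑ j, (q.M k i' j) ^ 2
            = (l k ((φ k)⁻¹ i')) ^ 2 * ∑ j, (p.M k ((φ k)⁻¹ i') j) ^ 2 := by
          intro i'
          rw [Finset.mul_sum]
          rw [← Equiv.sum_comp ((φ (k + 1))⁻¹ : Equiv.Perm _)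
            (fun j => (l k ((φ k)⁻¹ i')) ^ 2 * (p.M k ((φ k)⁻¹ i') j) ^ 2)]
          exact Finset.sum_congr rfl fun j _ => by rw [hent, mul_pow]
        have hpsum : ∑ j, (p.M k ((φ k)⁻¹ (φ k i)) j) ^ 2 = 1 :=
          Real.sqrt_eq_one.mp (hp k h1 hkK _)
        have hqsum : ∑ j, (q.M k (φ k i) j) ^ 2 = 1 :=
          Real.sqrt_eq_one.mp (hq k h1 hkK _)
        have := hrow (φ k i)
        rw [hqsum, hpsum] at this
        have hinv : (φ k)⁻¹ (φ k i) = i := by simp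
        rw [hinv] at this
        nlinarith [hlpos k i, sq_nonneg (l k i - 1)]
  refine ⟨φ, hφ0, hφK, fun k hk => ?_⟩
  obtain ⟨hM, hb⟩ := heq k hk
  have e1 : Matrix.diagonal (l k) = 1 := by
    rw [show l k = fun _ => 1 from funext (key (K - k) k (by omega))]
    exact Matrix.diagonal_one
  have e2 : Matrix.diagonal (l (k + 1)) = 1 := by
    rw [show l (k + 1) = fun _ => 1 from funext (key (K - (k + 1)) (k + 1) (by omega))]
    exact Matrix.diagonal_one
  rw [hM, hb, e1, e2, inv_one, Matrix.mul_one, Matrix.mul_one]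
  exact ⟨rfl, rfl⟩
end

section
/- Let γ : ℝ^l → ℝ^m be continuous piecewise linear, 𝒫 a finite set of closed polyhedra of ℝ^m covering ℝ^m, and A_1,...,A_s hyperplanes such that ⋃_{D∈𝒫} ∂γ⁻¹(D) ⊆ ⋃_k A_k. Let H = {y : aᵀy + b = 0} be an affine hyperplane and I = {k : A_k = H}. If x ∈ H and x ∉ A_k for all k ∉ I, then there exist r > 0 and D₋, D₊ ∈ 𝒫 such that B(x,r) ∩ {y : aᵀy + b < 0} ⊆ γ⁻¹(D₋) and B(x,r) ∩ {y : aᵀy + b > 0} ⊆ γ⁻¹(D₊). -/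
section Helpers

lemma subset_of_frontier_disjoint {α : Type*} [TopologicalSpace α] {U T : Set α}
    (hU : IsPreconnected U) (hd : ∀ y ∈ U, y ∉ frontier T)
    (hne : (U ∩ T).Nonempty) : U ⊆ T := by
  haveI := Subtype.preconnectedSpace hU
  have hUc : ∀ y ∈ U, y ∈ closure T → y ∈ T := by
    intro y hy hyc
    by_cases hyi : y ∈ interior T
    · exact interior_subset hyi
    · exact absurd ⟨hyc, hyi⟩ (hd y hy)
  set S : Set U := Subtype.val ⁻¹' T with hS
  have hSo : IsOpen S := by
    have h : S = Subtype.val ⁻¹' interior T := by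
      ext ⟨y, hy⟩
      simp only [Set.mem_preimage, hS]
      constructor
      · intro hyT
        by_contra hyi
        exact hd y hy ⟨subset_closure hyT, hyi⟩
      · exact fun h => interior_subset h
    rw [h]
    exact isOpen_interior.preimage continuous_subtype_val
  have hSc : IsClosed S := by
    have h : S = Subtype.val ⁻¹' closure T := by
      ext ⟨y, hy⟩
      simp only [Set.mem_preimage, hS]
      exact ⟨fun h => subset_closure h, fun h => hUc y hy h⟩
    rw [h]
    exact isClosed_closure.preimage continuous_subtype_val
  rcases isClopen_iff.mp ⟨hSc, hSo⟩ with h | h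
  · rcases hne with ⟨y, hyU, hyT⟩
    exact absurd (show (⟨y, hyU⟩ : U) ∈ S from hyT) (by simp [h])
  · intro z hz
    have : (⟨z, hz⟩ : U) ∈ S := by rw [h]; trivial
    exact this

end Helpers

def euclideanBall' {l : ℕ} (x : Fin l → ℝ) (r : ℝ) : Set (Fin l → ℝ) :=
  {y | Real.sqrt (∑ i, (y i - x i) ^ 2) < r}

noncomputable def ψ {l : ℕ} : (Fin l → ℝ) ≃L[ℝ] EuclideanSpace ℝ (Fin l) :=
  (EuclideanSpace.equiv (Fin l) ℝ).symm

lemma euclBall_eq {l : ℕ} (x : Fin l → ℝ) (r : ℝ) :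
    euclideanBall' x r = ψ ⁻¹' Metric.ball (ψ x) r := by
  ext y
  simp only [euclideanBall', Set.mem_setOf_eq, Set.mem_preimage, Metric.mem_ball]
  have h : dist (ψ y) (ψ x) = Real.sqrt (∑ i, (y i - x i) ^ 2) := by
    rw [EuclideanSpace.dist_eq]
    congr 1
    apply Finset.sum_congr rfl
    intro i _
    rw [show (ψ y) i = y i from rfl, show (ψ x) i = x i from rfl, Real.dist_eq, sq_abs]
  rw [h]

lemma euclBall_convex {l : ℕ} (x : Fin l → ℝ) (r : ℝ) : Convex ℝ (euclideanBall' x r) := by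
  rw [euclBall_eq]
  exact (convex_ball _ _).is_linear_preimage ⟨fun a b => map_add ψ a b, fun c v => map_smul ψ c v⟩

lemma euclBall_exists {l : ℕ} (x : Fin l → ℝ) {W : Set (Fin l → ℝ)} (hW : IsOpen W)
    (hx : x ∈ W) : ∃ r > 0, euclideanBall' x r ⊆ W := by
  have hWE : IsOpen ((ψ (l := l)).symm ⁻¹' W) := hW.preimage (ψ).symm.continuous
  obtain ⟨r, hr, hrsub⟩ := Metric.isOpen_iff.mp hWE (ψ x) (by simpa using hx)
  refine ⟨r, hr, fun y hy => ?_⟩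
  rw [euclBall_eq] at hy
  have := hrsub hy
  simpa using this

lemma halfspace_points {l : ℕ} (a : Fin l → ℝ) (b : ℝ) (ha : a ≠ 0) (x : Fin l → ℝ)
    (hx : (∑ j, a j * x j) + b = 0) {r : ℝ} (hr : 0 < r) :
    ∃ ym yp : Fin l → ℝ, ym ∈ euclideanBall' x r ∧ yp ∈ euclideanBall' x r ∧
      (∑ j, a j * ym j) + b < 0 ∧ (∑ j, a j * yp j) + b > 0 := by
  set n2 : ℝ := ∑ j, a j ^ 2 with hn2
  have hn2pos : 0 < n2 := by
    obtain ⟨j, hj⟩ := Function.ne_iff.mp ha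
    exact Finset.sum_pos' (fun i _ => sq_nonneg _)
      ⟨j, Finset.mem_univ j, by simpa using pow_pos (abs_pos.mpr hj) 2 |>.trans_eq (sq_abs _)⟩
  have hs : 0 < Real.sqrt n2 := Real.sqrt_pos.mpr hn2pos
  set t : ℝ := r / (2 * Real.sqrt n2) with ht
  have htpos : 0 < t := by positivity
  have hdist : ∀ ε : ℝ, |ε| = 1 → Real.sqrt (∑ j, ((x j + ε * (t * a j)) - x j) ^ 2) < r := by
    intro ε hε
    have h1 : (∑ j, ((x j + ε * (t * a j)) - x j) ^ 2) = (ε * t) ^ 2 * n2 := by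
      rw [hn2, Finset.mul_sum]
      exact Finset.sum_congr rfl fun j _ => by ring
    rw [h1, Real.sqrt_mul (sq_nonneg _), Real.sqrt_sq_eq_abs, abs_mul, hε, one_mul,
      abs_of_pos htpos, ht]
    have heq : r / (2 * Real.sqrt n2) * Real.sqrt n2 = r / 2 := by
      field_simp
    rw [heq]
    linarith
  have hval : ∀ ε : ℝ, (∑ j, a j * (x j + ε * (t * a j))) + b = ε * t * n2 := by
    intro ε
    have h2 : (∑ j, a j * (x j + ε * (t * a j))) = (∑ j, a j * x j) + ε * t * n2 := by
      rw [hn2, Finset.mul_sum, ← Finset.sum_add_distrib]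
      exact Finset.sum_congr rfl fun j _ => by ring
    rw [h2]; linarith
  refine ⟨fun j => x j + (-1) * (t * a j), fun j => x j + 1 * (t * a j),
    hdist (-1) (by norm_num), hdist 1 (by norm_num), ?_, ?_⟩
  · rw [hval]; nlinarith
  · rw [hval]; nlinarith

/-- The open Euclidean ball in `ℝ^l` (viewed as `Fin l → ℝ`). -/
def euclideanBall {l : ℕ} (x : Fin l → ℝ) (r : ℝ) : Set (Fin l → ℝ) :=
  {y | Real.sqrt (∑ i, (y i - x i) ^ 2) < r}

lemma euclideanBall_eq' {l : ℕ} (x : Fin l → ℝ) (r : ℝ) :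
    euclideanBall x r = euclideanBall' x r := rfl

theorem lemma_Dminus_Dplus {l m : ℕ} (γ : (Fin l → ℝ) → (Fin m → ℝ)) (hγ : IsCPL γ)
    (Pcal : Set (Set (Fin m → ℝ))) (hfin : Pcal.Finite)
    (hpoly : ∀ D ∈ Pcal, IsClosedPolyhedron D) (hcov : ⋃₀ Pcal = Set.univ)
    (s : ℕ) (av : Fin s → (Fin l → ℝ)) (ab : Fin s → ℝ) (hav : ∀ k, av k ≠ 0)
    (hA : (⋃ D ∈ Pcal, frontier (γ ⁻¹' D)) ⊆ ⋃ k, {y : Fin l → ℝ | (∑ j, av k j * y j) + ab k = 0})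
    (a : Fin l → ℝ) (b : ℝ) (ha : a ≠ 0) (x : Fin l → ℝ)
    (hx : (∑ j, a j * x j) + b = 0)
    (hnot : ∀ k, ({y : Fin l → ℝ | (∑ j, av k j * y j) + ab k = 0} : Set (Fin l → ℝ)) ≠ ({y : Fin l → ℝ | (∑ j, a j * y j) + b = 0} : Set (Fin l → ℝ)) →
      (∑ j, av k j * x j) + ab k ≠ 0) :
    ∃ r > 0, ∃ Dm ∈ Pcal, ∃ Dp ∈ Pcal,
      (euclideanBall x r ∩ {y | (∑ j, a j * y j) + b < 0} ⊆ γ ⁻¹' Dm) ∧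
      (euclideanBall x r ∩ {y | (∑ j, a j * y j) + b > 0} ⊆ γ ⁻¹' Dp) := by
  classical
  set Hset : Set (Fin l → ℝ) := {y | (∑ j, a j * y j) + b = 0} with hHset
  set Aset : Fin s → Set (Fin l → ℝ) := fun k => {y | (∑ j, av k j * y j) + ab k = 0} with hAset
  -- the open set avoiding all hyperplanes different from H
  set W : Set (Fin l → ℝ) := ⋂ k, {y | Aset k = Hset ∨ (∑ j, av k j * y j) + ab k ≠ 0}
    with hW
  have hgcont : ∀ k, Continuous (fun y : Fin l → ℝ => (∑ j, av k j * y j) + ab k) := by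
    intro k
    exact (continuous_finset_sum _ fun j _ => continuous_const.mul (continuous_apply j)).add
      continuous_const
  have hWo : IsOpen W := by
    apply isOpen_iInter_of_finite
    intro k
    by_cases hk : Aset k = Hset
    · have : {y : Fin l → ℝ | Aset k = Hset ∨ (∑ j, av k j * y j) + ab k ≠ 0} = Set.univ := by
        ext y; simp [hk]
      rw [this]; exact isOpen_univ
    · have : {y : Fin l → ℝ | Aset k = Hset ∨ (∑ j, av k j * y j) + ab k ≠ 0}
          = (fun y : Fin l → ℝ => (∑ j, av k j * y j) + ab k) ⁻¹' ({0}ᶜ) := by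
        ext y; simp [hk]
      rw [this]
      exact (isOpen_compl_singleton).preimage (hgcont k)
  have hxW : x ∈ W := by
    rw [hW]
    refine Set.mem_iInter.mpr fun k => ?_
    by_cases hk : Aset k = Hset
    · exact Or.inl hk
    · exact Or.inr (hnot k hk)
  obtain ⟨r, hr, hrW⟩ := euclBall_exists x hWo hxW
  -- the two open half-ball pieces
  set Um : Set (Fin l → ℝ) := euclideanBall x r ∩ {y | (∑ j, a j * y j) + b < 0} with hUm
  set Up : Set (Fin l → ℝ) := euclideanBall x r ∩ {y | (∑ j, a j * y j) + b > 0} with hUp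
  have hlin : IsLinearMap ℝ (fun y : Fin l → ℝ => ∑ j, a j * y j) := by
    constructor
    · intro y z
      simp only [Pi.add_apply, mul_add, Finset.sum_add_distrib]
    · intro c y
      simp only [Pi.smul_apply, smul_eq_mul, Finset.mul_sum]
      exact Finset.sum_congr rfl fun j _ => by ring
  have hmconv : Convex ℝ Um := by
    apply ((euclBall_convex x r).inter)
    have h1 := convex_halfSpace_lt hlin (-b)
    have h2 : {y : Fin l → ℝ | (∑ j, a j * y j) + b < 0}
        = {w : Fin l → ℝ | (∑ j, a j * w j) < -b} := by
      ext y; constructor <;> intro h <;> simp only [Set.mem_setOf_eq] at * <;> linarith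
    rw [h2]
    exact h1
  have hpconv : Convex ℝ Up := by
    apply ((euclBall_convex x r).inter)
    have h1 := convex_halfSpace_gt hlin (-b)
    have h2 : {y : Fin l → ℝ | (∑ j, a j * y j) + b > 0}
        = {w : Fin l → ℝ | (∑ j, a j * w j) > -b} := by
      ext y; constructor <;> intro h <;> simp only [Set.mem_setOf_eq] at * <;> linarith
    rw [h2]
    exact h1
  -- frontier of each preimage avoids both Um and Up
  have hfront : ∀ D ∈ Pcal, ∀ y, y ∈ euclideanBall x r →
      ((∑ j, a j * y j) + b ≠ 0) → y ∉ frontier (γ ⁻¹' D) := by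
    intro D hD y hyB hyne hyf
    have hy1 : y ∈ ⋃ D ∈ Pcal, frontier (γ ⁻¹' D) :=
      Set.mem_biUnion hD hyf
    obtain ⟨k, hk⟩ := Set.mem_iUnion.mp (hA hy1)
    have hyW : y ∈ W := hrW hyB
    have := Set.mem_iInter.mp hyW k
    rcases this with h | h
    · -- A_k = H, so y ∈ H, contradiction
      have : y ∈ Hset := by rw [← h]; exact hk
      exact hyne this
    · exact h hk
  -- pick points in each open half-ball
  obtain ⟨ym, yp, hymB, hypB, hymlt, hypgt⟩ := halfspace_points a b ha x hx hr
  -- find polyhedra containing the images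
  have hpick : ∀ p : Fin m → ℝ, ∃ D ∈ Pcal, p ∈ D := by
    intro p
    have : p ∈ ⋃₀ Pcal := hcov ▸ Set.mem_univ p
    exact this
  obtain ⟨Dm, hDm, hymD⟩ := hpick (γ ym)
  obtain ⟨Dp, hDp, hypD⟩ := hpick (γ yp)
  refine ⟨r, hr, Dm, hDm, Dp, hDp, ?_, ?_⟩
  · apply subset_of_frontier_disjoint hmconv.isPreconnected
    · intro y hy
      exact hfront Dm hDm y hy.1 (ne_of_lt hy.2)
    · exact ⟨ym, ⟨hymB, hymlt⟩, hymD⟩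
  · apply subset_of_frontier_disjoint hpconv.isPreconnected
    · intro y hy
      exact hfront Dp hDp y hy.1 (ne_of_gt hy.2)
    · exact ⟨yp, ⟨hypB, hypgt⟩, hypD⟩
end

section
/- Consider the two-hidden-layer one-neuron-per-layer ReLU networks with parameters M² = 1, b² = a, M¹ = 1, b¹ = -1-a, M⁰ = 1, b⁰ = 0 for a > 0. Then for every a > 0 and every x ∈ ℝ, the implemented function satisfies f_a(x) = σ(σ(σ(x + a) - 1 - a)) = σ(x - 1); in particular, all parameterizations in this family implement the same function although for a ≠ a' they are not equivalent modulo permutation and positive rescaling. -/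
theorem counterexample_Pc :
    (∀ a : ℝ, 0 < a → ∀ x : ℝ,
      max (max (x + a) 0 - 1 - a) 0 = max (x - 1) 0 ∧
      max (max (max (x + a) 0 - 1 - a) 0) 0 = max (x - 1) 0) ∧
    (∀ a a' : ℝ, 0 < a → 0 < a' → a ≠ a' →
      ¬ ∃ l1 l2 : ℝ, 0 < l1 ∧ 0 < l2 ∧
        (1 : ℝ) = l2 * 1 ∧ a' = l2 * a ∧
        (1 : ℝ) = (l1 / l2) * 1 ∧ (-1 - a') = l1 * (-1 - a) ∧
        (1 : ℝ) = 1 / l1 ∧ (0 : ℝ) = (0 : ℝ)) := by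
  constructor
  · intro a ha x
    have h : max (max (x + a) 0 - 1 - a) 0 = max (x - 1) 0 := by
      rcases le_total (x + a) 0 with h1 | h1
      · rw [max_eq_right h1]
        have : x - 1 ≤ 0 := by linarith
        rw [max_eq_right this, max_eq_right (by linarith)]
      · rw [max_eq_left h1]
        congr 1; ring
    refine ⟨h, ?_⟩
    rw [h, max_eq_left (le_max_right _ _)]
  · rintro a a' ha ha' hne ⟨l1, l2, hl1, hl2, h1, h2, h3, h4, h5, -⟩
    have hl1' : l1 = 1 := by
      field_simp at h5; linarith
    have hl2' : l2 = 1 := by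
      rw [hl1'] at h3; field_simp at h3; linarith
    rw [hl2', one_mul] at h2
    exact hne h2.symm
end
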